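/- arXiv:1112.6031 — 5 statements merged into one kernel-verified Lean document; each statement's English description precedes it below -/
import Mathlib

section
/- Let 0 ≤ a < x, α > 0, ρ > 0, and let f be continuous on [a, x]. Then the limit as ρ → 1 of the generalized fractional integral (ρ^{1-α}/Γ(α)) ∫_a^x τ^{ρ-1} (x^ρ - τ^ρ)^{α-1} f(τ) dτ equals the Riemann–Liouville fractional integral (1/Γ(α)) ∫_a^x (x - τ)^{α-1} f(τ) dτ. -/
/-!
Dominated convergence as `ρ → 1`. By Bernoulli's inequality `x ^ ρ - τ ^ ρ` lies between
`min 1 ρ * x ^ (ρ - 1) * (x - τ)` and `max 1 ρ * x ^ (ρ - 1) * (x - τ)`, and both constants tend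
to `1`; so for `ρ` near `1` the kernel `τ ^ (ρ - 1) * (x ^ ρ - τ ^ ρ) ^ (α - 1)` is dominated by a
multiple of `τ ^ (-1/2) * (x - τ) ^ (α - 1)`, which is integrable on `[a, x]` because both
exponents exceed `-1`.
-/

open MeasureTheory Filter Real Set Topology

theorem rpow_le_max_of_mem_Icc {s t u q : ℝ} (hs : 0 < s) (hst : s ≤ t) (htu : t ≤ u) :
    t ^ q ≤ max (s ^ q) (u ^ q) := by
  rcases le_total q 0 with hq | hq
  · exact (rpow_le_rpow_of_nonpos hs hst hq).trans (le_max_left _ _)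
  · exact (rpow_le_rpow (hs.le.trans hst) htu hq).trans (le_max_right _ _)

theorem rpow_le_max_mul_rpow_of_mul_le_of_le_mul {L U s t q : ℝ} (hL : 0 < L) (ht : 0 < t)
    (hLs : L * t ≤ s) (hsU : s ≤ U * t) : s ^ q ≤ max (L ^ q) (U ^ q) * t ^ q := by
  have hs : 0 ≤ s := (mul_pos hL ht).le.trans hLs
  calc s ^ q = (s / t) ^ q * t ^ q := by
        rw [div_rpow hs ht.le, div_mul_cancel₀ _ (by positivity)]
    _ ≤ max (L ^ q) (U ^ q) * t ^ q := by
      gcongr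
      exact rpow_le_max_of_mem_Icc hL ((le_div_iff₀ ht).2 hLs) ((div_le_iff₀ ht).2 hsU)

theorem one_sub_rpow_mem_Icc {u ρ : ℝ} (hu0 : 0 ≤ u) (hu1 : u ≤ 1) (hρ : 0 < ρ) :
    1 - u ^ ρ ∈ Icc (min 1 ρ * (1 - u)) (max 1 ρ * (1 - u)) := by
  have hs : -1 ≤ u - 1 := by linarith
  rcases le_total ρ 1 with h | h
  · have := rpow_one_add_le_one_add_mul_self hs hρ.le h
    rw [min_eq_right h, max_eq_left h]
    simp only [add_sub_cancel] at this
    exact ⟨by linarith, by linarith [self_le_rpow_of_le_one hu0 hu1 h]⟩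
  · have := one_add_mul_self_le_rpow_one_add hs h
    rw [min_eq_left h, max_eq_right h]
    simp only [add_sub_cancel] at this
    exact ⟨by linarith [rpow_le_self_of_le_one hu0 hu1 h], by linarith⟩

theorem rpow_sub_rpow_mem_Icc {x τ ρ : ℝ} (hx : 0 < x) (hτ0 : 0 ≤ τ) (hτx : τ ≤ x)
    (hρ : 0 < ρ) :
    x ^ ρ - τ ^ ρ ∈
      Icc (min 1 ρ * x ^ (ρ - 1) * (x - τ)) (max 1 ρ * x ^ (ρ - 1) * (x - τ)) := by
  obtain ⟨hlow, hupp⟩ :=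
    one_sub_rpow_mem_Icc (div_nonneg hτ0 hx.le) ((div_le_one hx).2 hτx) hρ
  have hxρ : 0 < x ^ ρ := rpow_pos_of_pos hx ρ
  have hdiff : x ^ ρ - τ ^ ρ = x ^ ρ * (1 - (τ / x) ^ ρ) := by
    rw [div_rpow hτ0 hx.le]; field_simp
  have hlin : ∀ c : ℝ, c * x ^ (ρ - 1) * (x - τ) = x ^ ρ * (c * (1 - τ / x)) := by
    intro c; rw [rpow_sub_one hx.ne']; field_simp
  rw [hdiff, hlin, hlin]
  exact ⟨mul_le_mul_of_nonneg_left hlow hxρ.le, mul_le_mul_of_nonneg_left hupp hxρ.le⟩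

theorem rpow_le_max_one_mul_rpow {τ b p r : ℝ} (hτ : 0 < τ) (hτb : τ ≤ b) (hpr : p ≤ r)
    (hrp : r ≤ p + 1) : τ ^ r ≤ max 1 b * τ ^ p := by
  have hle : τ ^ (r - p) ≤ max 1 b :=
    calc τ ^ (r - p) ≤ max 1 b ^ (r - p) :=
          rpow_le_rpow hτ.le (hτb.trans (le_max_right _ _)) (by linarith)
      _ ≤ max 1 b ^ (1 : ℝ) := rpow_le_rpow_of_exponent_le (le_max_left _ _) (by linarith)
      _ = max 1 b := rpow_one _
  calc τ ^ r = τ ^ (r - p) * τ ^ p := by rw [← rpow_add hτ, sub_add_cancel]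
    _ ≤ max 1 b * τ ^ p := by gcongr

theorem intervalIntegrable_rpow_mul_sub_rpow {a b p q : ℝ} (ha : 0 ≤ a) (hab : a ≤ b)
    (hp : -1 < p) (hq : -1 < q) :
    IntervalIntegrable (fun τ => τ ^ p * (b - τ) ^ q) volume a b := by
  set C := max (max ((b / 2) ^ q) (b ^ q)) (max ((b / 2) ^ p) (b ^ p))
  have hleft : IntervalIntegrable (fun τ : ℝ => τ ^ p) volume a b :=
    intervalIntegral.intervalIntegrable_rpow' hp
  have hright : IntervalIntegrable (fun τ => (b - τ) ^ q) volume a b := by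
    have h := (intervalIntegral.intervalIntegrable_rpow' hq (a := 0) (b := b - a)).comp_sub_left b
    simpa using h.symm
  have hmeas : Measurable fun τ : ℝ => τ ^ p * (b - τ) ^ q := by fun_prop
  refine ((hleft.const_mul C).add (hright.const_mul C)).mono_fun hmeas.aestronglyMeasurable ?_
  filter_upwards [ae_restrict_mem measurableSet_uIoc] with τ hτ
  rw [uIoc_of_le hab] at hτ
  obtain ⟨hτa, hτb⟩ := hτ
  have hτ0 : 0 < τ := ha.trans_lt hτa
  have hτp : 0 ≤ τ ^ p := rpow_nonneg hτ0.le p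
  have hbτq : 0 ≤ (b - τ) ^ q := rpow_nonneg (sub_nonneg.2 hτb) q
  have hC : 0 ≤ C :=
    (rpow_nonneg (hτ0.le.trans hτb) p).trans ((le_max_right _ _).trans (le_max_right _ _))
  rw [norm_of_nonneg (mul_nonneg hτp hbτq), norm_of_nonneg (by positivity)]
  rcases le_total τ (b / 2) with h | h
  · have : (b - τ) ^ q ≤ C :=
      (rpow_le_max_of_mem_Icc (by linarith) (by linarith) (by linarith)).trans (le_max_left _ _)
    nlinarith
  · have : τ ^ p ≤ C := (rpow_le_max_of_mem_Icc (by linarith) h hτb).trans (le_max_right _ _)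
    nlinarith

theorem eventually_nhds_one_rpow_sub_one_bounds {x : ℝ} (hx : 0 < x) :
    ∀ᶠ ρ in 𝓝 (1 : ℝ), ρ ∈ Icc (1 / 2 : ℝ) (3 / 2) ∧
      1 / 2 ≤ min 1 ρ * x ^ (ρ - 1) ∧ max 1 ρ * x ^ (ρ - 1) ≤ 2 := by
  have hIcc : Icc (1 / 2 : ℝ) (3 / 2) ∈ 𝓝 1 := Icc_mem_nhds (by norm_num) (by norm_num)
  have hmin : ContinuousAt (fun ρ : ℝ => min 1 ρ * x ^ (ρ - 1)) 1 := by
    fun_prop (disch := positivity)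
  have hmax : ContinuousAt (fun ρ : ℝ => max 1 ρ * x ^ (ρ - 1)) 1 := by
    fun_prop (disch := positivity)
  have hlow : ∀ᶠ ρ in 𝓝 (1 : ℝ), (1 / 2 : ℝ) < min 1 ρ * x ^ (ρ - 1) :=
    continuousAt_const.eventually_lt hmin (by norm_num)
  have hupp : ∀ᶠ ρ in 𝓝 (1 : ℝ), max 1 ρ * x ^ (ρ - 1) < 2 :=
    hmax.eventually_lt continuousAt_const (by norm_num)
  filter_upwards [hIcc, hlow, hupp] with ρ hρ hlow hupp
  exact ⟨hρ, hlow.le, hupp.le⟩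

theorem eventually_norm_rpow_sub_one_mul_sub_rpow_le {x : ℝ} (hx : 0 < x) (α : ℝ) :
    ∀ᶠ ρ in 𝓝 (1 : ℝ), ∀ τ ∈ Ioo 0 x, ‖τ ^ (ρ - 1) * (x ^ ρ - τ ^ ρ) ^ (α - 1)‖ ≤
      max 1 x * max ((1 / 2 : ℝ) ^ (α - 1)) (2 ^ (α - 1)) *
        (τ ^ (-(1 / 2) : ℝ) * (x - τ) ^ (α - 1)) := by
  filter_upwards [eventually_nhds_one_rpow_sub_one_bounds hx] with ρ ⟨hρ, hlow, hupp⟩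
  rintro τ ⟨hτ0, hτx⟩
  obtain ⟨hl, hu⟩ := rpow_sub_rpow_mem_Icc (ρ := ρ) hx hτ0.le hτx.le (by linarith [hρ.1])
  have hsub : 0 ≤ x ^ ρ - τ ^ ρ := le_trans (by positivity) hl
  rw [norm_mul, norm_of_nonneg (rpow_nonneg hτ0.le _), norm_of_nonneg (rpow_nonneg hsub _)]
  calc τ ^ (ρ - 1) * (x ^ ρ - τ ^ ρ) ^ (α - 1)
      ≤ (max 1 x * τ ^ (-(1 / 2) : ℝ)) *
          (max ((1 / 2 : ℝ) ^ (α - 1)) (2 ^ (α - 1)) * (x - τ) ^ (α - 1)) := by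
        gcongr
        · exact rpow_le_max_one_mul_rpow hτ0 hτx.le (by linarith [hρ.1]) (by linarith [hρ.2])
        · exact rpow_le_max_mul_rpow_of_mul_le_of_le_mul (by norm_num) (sub_pos.2 hτx)
            (le_trans (by gcongr) hl) (hu.trans (by gcongr))
    _ = _ := by ring

theorem tendsto_intervalIntegral_rpow_sub_rpow_kernel {a x α : ℝ} {f : ℝ → ℝ} (ha : 0 ≤ a)
    (hax : a < x) (hα : 0 < α) (hf : ContinuousOn f (Icc a x)) :
    Tendsto (fun ρ : ℝ => ∫ τ in a..x, τ ^ (ρ - 1) * (x ^ ρ - τ ^ ρ) ^ (α - 1) * f τ) (𝓝 1)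
      (𝓝 (∫ τ in a..x, (x - τ) ^ (α - 1) * f τ)) := by
  have hx : 0 < x := ha.trans_lt hax
  obtain ⟨M, hM⟩ := isCompact_Icc.exists_bound_of_continuousOn hf
  have hfm : AEStronglyMeasurable f (volume.restrict (uIoc a x)) := by
    rw [uIoc_of_le hax.le]
    exact (hf.mono Ioc_subset_Icc_self).aestronglyMeasurable measurableSet_Ioc
  refine intervalIntegral.tendsto_integral_filter_of_dominated_convergence
    (fun τ => max 1 x * max ((1 / 2 : ℝ) ^ (α - 1)) (2 ^ (α - 1)) *
      (τ ^ (-(1 / 2) : ℝ) * (x - τ) ^ (α - 1)) * M) ?_ ?_ ?_ ?_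
  · refine Eventually.of_forall fun ρ => Measurable.aestronglyMeasurable ?_ |>.mul hfm
    fun_prop
  · filter_upwards [eventually_norm_rpow_sub_one_mul_sub_rpow_le hx α] with ρ hρ
    filter_upwards [Measure.ae_ne volume x] with τ hτx hτ
    rw [uIoc_of_le hax.le] at hτ
    have hkernel := hρ τ ⟨ha.trans_lt hτ.1, lt_of_le_of_ne hτ.2 hτx⟩
    rw [norm_mul]
    exact mul_le_mul hkernel (hM τ (Ioc_subset_Icc_self hτ)) (norm_nonneg _)
      ((norm_nonneg _).trans hkernel)
  · exact ((intervalIntegrable_rpow_mul_sub_rpow ha hax.le (by norm_num) (by linarith)).const_mul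
      _).mul_const _
  · filter_upwards [Measure.ae_ne volume x] with τ hτx hτ
    rw [uIoc_of_le hax.le] at hτ
    have hτ0 : 0 < τ := ha.trans_lt hτ.1
    have hτx' : τ < x := lt_of_le_of_ne hτ.2 hτx
    have hcont :
        ContinuousAt (fun ρ : ℝ => τ ^ (ρ - 1) * (x ^ ρ - τ ^ ρ) ^ (α - 1) * f τ) 1 := by
      fun_prop (disch := first | positivity | (simp only [rpow_one]; left; linarith))
    simpa using hcont.tendsto

/-- For `0 ≤ a < x`, `α > 0` and `f` continuous on `[a, x]`, the
generalized (Katugampola) fractional integral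
`(ρ^{1-α}/Γ(α)) ∫_a^x τ^{ρ-1} (x^ρ - τ^ρ)^{α-1} f(τ) dτ`
tends, as `ρ → 1` (through positive `ρ`), to the Riemann–Liouville fractional integral
`(1/Γ(α)) ∫_a^x (x - τ)^{α-1} f(τ) dτ`. -/
theorem genI_tendsto_riemannLiouville (a x α : ℝ) (ha : 0 ≤ a) (hax : a < x)
    (hα : 0 < α) (f : ℝ → ℝ) (hf : ContinuousOn f (Set.Icc a x)) :
    Tendsto
      (fun ρ : ℝ =>
        (ρ ^ (1 - α) / Real.Gamma α) *
          ∫ τ in a..x, τ ^ (ρ - 1) * (x ^ ρ - τ ^ ρ) ^ (α - 1) * f τ)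
      (nhdsWithin 1 (Set.Ioi (0 : ℝ)))
      (nhds ((1 / Real.Gamma α) * ∫ τ in a..x, (x - τ) ^ (α - 1) * f τ)) := by
  have hprefactor :
      Tendsto (fun ρ : ℝ => ρ ^ (1 - α) / Real.Gamma α) (𝓝 1) (𝓝 (1 / Real.Gamma α)) := by
    have hcont : ContinuousAt (fun ρ : ℝ => ρ ^ (1 - α) / Real.Gamma α) 1 := by
      fun_prop (disch := norm_num)
    simpa using hcont.tendsto
  exact (hprefactor.mul (tendsto_intervalIntegral_rpow_sub_rpow_kernel ha hax hα hf)).mono_left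
    nhdsWithin_le_nhds
end

section
/- Let 0 < a < x, α > 0, and let f be continuous on [a, x]. Then the limit as ρ → 0⁺ of the generalized fractional integral (ρ^{1-α}/Γ(α)) ∫_a^x τ^{ρ-1} (x^ρ - τ^ρ)^{α-1} f(τ) dτ equals the Hadamard fractional integral (1/Γ(α)) ∫_a^x (log(x/τ))^{α-1} f(τ) dτ/τ. -/
open MeasureTheory Filter Real

open Set Topology

/-!
For `ρ > 0` the kernel `ρ^{1-α} τ^{ρ-1} (x^ρ - τ^ρ)^{α-1}` equals `τ^{ρ-1} ((x^ρ - τ^ρ)/ρ)^{α-1}`,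
and `(x^ρ - τ^ρ)/ρ`, a difference quotient of `ρ ↦ x^ρ - τ^ρ` at `0`, tends to `log (x/τ)`;
so the integrand converges pointwise to the Hadamard integrand. Tangent-line bounds for `exp`
at `ρ log τ` and `ρ log x`, together with `(x - τ)/x ≤ log (x/τ) ≤ (x - τ)/τ`, trap
`(x^ρ - τ^ρ)/ρ` between constant multiples of `x - τ` uniformly for small `ρ`. Hence the kernel
is dominated by `C (x - τ)^{α-1}`, which is integrable because `α > 0`, and dominated convergence
concludes.
-/

namespace Real

theorem exp_mul_sub_le_exp_sub_exp (u v : ℝ) : exp u * (v - u) ≤ exp v - exp u := by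
  have h := mul_le_mul_of_nonneg_left (add_one_le_exp (v - u)) (exp_pos u).le
  rw [← exp_add, add_sub_cancel] at h
  linarith

theorem exp_sub_exp_le_exp_mul_sub (u v : ℝ) : exp v - exp u ≤ exp v * (v - u) := by
  have h := mul_le_mul_of_nonneg_left (add_one_le_exp (u - v)) (exp_pos v).le
  rw [← exp_add, add_sub_cancel] at h
  linarith

section RpowSubRpow

variable {τ x : ℝ}

theorem rpow_mul_log_div_le_rpow_sub_rpow (hτ : 0 < τ) (hx : 0 < x) (ρ : ℝ) :
    τ ^ ρ * (ρ * log (x / τ)) ≤ x ^ ρ - τ ^ ρ := by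
  rw [rpow_def_of_pos hτ, rpow_def_of_pos hx, log_div hx.ne' hτ.ne']
  convert exp_mul_sub_le_exp_sub_exp (log τ * ρ) (log x * ρ) using 2
  ring

theorem rpow_sub_rpow_le_rpow_mul_log_div (hτ : 0 < τ) (hx : 0 < x) (ρ : ℝ) :
    x ^ ρ - τ ^ ρ ≤ x ^ ρ * (ρ * log (x / τ)) := by
  rw [rpow_def_of_pos hτ, rpow_def_of_pos hx, log_div hx.ne' hτ.ne']
  convert exp_sub_exp_le_exp_mul_sub (log τ * ρ) (log x * ρ) using 2
  ring

theorem sub_div_le_log_div (hτ : 0 < τ) (hx : 0 < x) : (x - τ) / x ≤ log (x / τ) := by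
  have h := one_sub_inv_le_log_of_pos (div_pos hx hτ)
  rwa [inv_div, one_sub_div hx.ne'] at h

theorem log_div_le_sub_div (hτ : 0 < τ) (hx : 0 < x) : log (x / τ) ≤ (x - τ) / τ := by
  have h := log_le_sub_one_of_pos (div_pos hx hτ)
  rwa [div_sub_one hτ.ne'] at h

theorem rpow_sub_rpow_div_mem_Icc (hτ : 0 < τ) (hτx : τ ≤ x) {ρ : ℝ} (hρ : 0 < ρ) :
    (x ^ ρ - τ ^ ρ) / ρ ∈ Icc (τ ^ ρ / x * (x - τ)) (x ^ ρ / τ * (x - τ)) := by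
  have hx := hτ.trans_le hτx
  have hL := sub_div_le_log_div hτ hx
  have hL' := log_div_le_sub_div hτ hx
  constructor
  · rw [le_div_iff₀ hρ]
    calc τ ^ ρ / x * (x - τ) * ρ = τ ^ ρ * (ρ * ((x - τ) / x)) := by ring
      _ ≤ τ ^ ρ * (ρ * log (x / τ)) := by gcongr
      _ ≤ _ := rpow_mul_log_div_le_rpow_sub_rpow hτ hx ρ
  · rw [div_le_iff₀ hρ]
    calc x ^ ρ - τ ^ ρ ≤ x ^ ρ * (ρ * log (x / τ)) := rpow_sub_rpow_le_rpow_mul_log_div hτ hx ρ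
      _ ≤ x ^ ρ * (ρ * ((x - τ) / τ)) := by gcongr
      _ = _ := by ring

theorem tendsto_rpow_sub_rpow_div (hτ : 0 < τ) (hx : 0 < x) :
    Tendsto (fun ρ : ℝ => (x ^ ρ - τ ^ ρ) / ρ) (𝓝[≠] 0) (𝓝 (log (x / τ))) := by
  have hD := ((hasStrictDerivAt_const_rpow hx 0).sub
    (hasStrictDerivAt_const_rpow hτ 0)).hasDerivAt.tendsto_slope_zero
  rw [log_div hx.ne' hτ.ne']
  simpa [div_eq_inv_mul] using hD

end RpowSubRpow

theorem rpow_le_max_mul_rpow {y z c₁ c₂ : ℝ} (β : ℝ) (hc₁ : 0 < c₁) (hy : 0 < y)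
    (h₁ : c₁ * y ≤ z) (h₂ : z ≤ c₂ * y) : z ^ β ≤ max (c₁ ^ β) (c₂ ^ β) * y ^ β := by
  have hz : 0 < z := (mul_pos hc₁ hy).trans_le h₁
  rcases le_total 0 β with hβ | hβ
  · calc z ^ β ≤ (c₂ * y) ^ β := rpow_le_rpow hz.le h₂ hβ
      _ = c₂ ^ β * y ^ β := mul_rpow (nonneg_of_mul_nonneg_left (hz.le.trans h₂) hy) hy.le
      _ ≤ _ := by gcongr; exact le_max_right _ _
  · calc z ^ β ≤ (c₁ * y) ^ β := rpow_le_rpow_of_nonpos (by positivity) h₁ hβ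
      _ = c₁ ^ β * y ^ β := mul_rpow hc₁.le hy.le
      _ ≤ _ := by gcongr; exact le_max_left _ _

end Real

noncomputable def katugampolaKernel (x α ρ τ : ℝ) : ℝ :=
  ρ ^ (1 - α) * τ ^ (ρ - 1) * (x ^ ρ - τ ^ ρ) ^ (α - 1)

section KatugampolaKernel

variable {x α ρ τ : ℝ}

theorem katugampolaKernel_eq (hρ : 0 < ρ) (hτ : 0 ≤ τ) (hτx : τ ≤ x) :
    katugampolaKernel x α ρ τ = τ ^ (ρ - 1) * ((x ^ ρ - τ ^ ρ) / ρ) ^ (α - 1) := by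
  have hsub : 0 ≤ x ^ ρ - τ ^ ρ := sub_nonneg.2 (rpow_le_rpow hτ hτx hρ.le)
  rw [katugampolaKernel, div_rpow hsub hρ.le, div_eq_mul_inv, ← rpow_neg hρ.le, neg_sub]
  ring

theorem continuousOn_katugampolaKernel (hρ : 0 < ρ) :
    ContinuousOn (katugampolaKernel x α ρ) (Ioo 0 x) := by
  refine (continuousOn_const.mul (continuousOn_id.rpow_const fun τ hτ => Or.inl hτ.1.ne')).mul
    ((continuousOn_const.sub (continuousOn_id.rpow_const fun _ _ => Or.inr hρ.le)).rpow_const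
      fun τ (hτ : τ ∈ Ioo 0 x) => Or.inl ?_)
  exact (sub_pos.2 (rpow_lt_rpow hτ.1.le hτ.2 hρ)).ne'

theorem tendsto_katugampolaKernel (hτ : 0 < τ) (hτx : τ < x) :
    Tendsto (fun ρ => katugampolaKernel x α ρ τ) (𝓝[>] 0) (𝓝 (log (x / τ) ^ (α - 1) / τ)) := by
  have hL : log (x / τ) ≠ 0 := (log_pos ((one_lt_div hτ).2 hτx)).ne'
  have hquot := (tendsto_rpow_sub_rpow_div hτ (hτ.trans hτx)).mono_left
    (nhdsWithin_mono 0 fun ρ (hρ : 0 < ρ) => hρ.ne')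
  have hpow : Tendsto (fun ρ : ℝ => τ ^ (ρ - 1)) (𝓝[>] 0) (𝓝 (τ ^ ((0 : ℝ) - 1))) :=
    ((continuous_const_rpow hτ.ne').comp (continuous_sub_right 1)).continuousAt.tendsto.mono_left
      nhdsWithin_le_nhds
  have hlim := hpow.mul ((continuousAt_rpow_const _ (α - 1) (Or.inl hL)).tendsto.comp hquot)
  rw [zero_sub, rpow_neg_one, ← div_eq_inv_mul] at hlim
  refine hlim.congr' ?_
  filter_upwards [self_mem_nhdsWithin] with ρ hρ
  exact (katugampolaKernel_eq hρ hτ.le hτx.le).symm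

end KatugampolaKernel

theorem eventually_norm_katugampolaKernel_le {a x : ℝ} (ha : 0 < a) (hax : a < x) (α : ℝ) :
    ∃ C, ∀ᶠ ρ in 𝓝[>] 0, ∀ τ ∈ Ioo a x,
      ‖katugampolaKernel x α ρ τ‖ ≤ C * (x - τ) ^ (α - 1) := by
  have hx : 0 < x := ha.trans hax
  have hpow_one {b : ℝ} (hb : 0 < b) : Tendsto (fun ρ : ℝ => b ^ ρ) (𝓝[>] 0) (𝓝 1) := by
    simpa using ((continuous_const_rpow hb.ne').tendsto 0).mono_left nhdsWithin_le_nhds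
  refine ⟨2 / a * max ((1 / (2 * x)) ^ (α - 1)) ((2 / a) ^ (α - 1)), ?_⟩
  filter_upwards [self_mem_nhdsWithin,
    (hpow_one ha).eventually_const_le (by norm_num : (1 : ℝ) / 2 < 1),
    (hpow_one hx).eventually_le_const (by norm_num : (1 : ℝ) < 2)] with ρ hρ ha_ρ hx_ρ τ hτ
  have hτ0 : 0 < τ := ha.trans hτ.1
  have hτ_ρ : a ^ ρ ≤ τ ^ ρ := rpow_le_rpow ha.le hτ.1.le hρ.le
  have hxτ_ρ : τ ^ ρ ≤ x ^ ρ := rpow_le_rpow hτ0.le hτ.2.le hρ.le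
  obtain ⟨hlow, hupp⟩ := rpow_sub_rpow_div_mem_Icc hτ0 hτ.2.le hρ
  have hfactor : τ ^ (ρ - 1) ≤ 2 / a := by
    rw [rpow_sub_one hτ0.ne']
    exact div_le_div₀ zero_le_two (hxτ_ρ.trans hx_ρ) ha hτ.1.le
  have hquot : ((x ^ ρ - τ ^ ρ) / ρ) ^ (α - 1) ≤
      max ((1 / (2 * x)) ^ (α - 1)) ((2 / a) ^ (α - 1)) * (x - τ) ^ (α - 1) := by
    have hxτ : 0 ≤ x - τ := (sub_pos.2 hτ.2).le
    refine rpow_le_max_mul_rpow _ (by positivity) (sub_pos.2 hτ.2) (le_trans ?_ hlow)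
      (hupp.trans ?_)
    · refine mul_le_mul_of_nonneg_right ?_ hxτ
      calc 1 / (2 * x) = 1 / 2 / x := by ring
        _ ≤ τ ^ ρ / x := by gcongr; exact ha_ρ.trans hτ_ρ
    · exact mul_le_mul_of_nonneg_right (div_le_div₀ zero_le_two hx_ρ ha hτ.1.le) hxτ
  have hquot0 : 0 ≤ ((x ^ ρ - τ ^ ρ) / ρ) ^ (α - 1) :=
    rpow_nonneg (div_nonneg (sub_nonneg.2 hxτ_ρ) hρ.le) _
  rw [katugampolaKernel_eq hρ hτ0.le hτ.2.le, norm_of_nonneg (by positivity), mul_assoc]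
  exact mul_le_mul hfactor hquot hquot0 (by positivity)

theorem tendsto_integral_katugampolaKernel_mul {a x α : ℝ} (ha : 0 < a) (hax : a < x)
    (hα : 0 < α) {f : ℝ → ℝ} (hf : ContinuousOn f (Icc a x)) :
    Tendsto (fun ρ => ∫ τ in a..x, katugampolaKernel x α ρ τ * f τ) (𝓝[>] 0)
      (𝓝 (∫ τ in a..x, log (x / τ) ^ (α - 1) * f τ / τ)) := by
  obtain ⟨C, hC⟩ := eventually_norm_katugampolaKernel_le ha hax α
  obtain ⟨B, hB⟩ := isCompact_Icc.exists_bound_of_continuousOn hf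
  have hIoo : ∀ᵐ τ, τ ∈ uIoc a x → τ ∈ Ioo a x := by
    filter_upwards [volume.ae_ne x] with τ hne hτ
    rw [uIoc_of_le hax.le] at hτ
    exact ⟨hτ.1, lt_of_le_of_ne hτ.2 hne⟩
  refine intervalIntegral.tendsto_integral_filter_of_dominated_convergence
    (fun τ => C * (x - τ) ^ (α - 1) * B) ?_ ?_ ?_ ?_
  · filter_upwards [self_mem_nhdsWithin] with ρ hρ
    rw [uIoc_of_le hax.le, ← Measure.restrict_congr_set Ioo_ae_eq_Ioc]
    refine ContinuousOn.aestronglyMeasurable ?_ measurableSet_Ioo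
    exact ((continuousOn_katugampolaKernel hρ).mono (Ioo_subset_Ioo_left ha.le)).mul
      (hf.mono Ioo_subset_Icc_self)
  · filter_upwards [hC] with ρ hρ
    filter_upwards [hIoo] with τ hτ hmem
    have hkernel := hρ τ (hτ hmem)
    rw [norm_mul]
    exact mul_le_mul hkernel (hB τ (Ioo_subset_Icc_self (hτ hmem))) (norm_nonneg _)
      ((norm_nonneg _).trans hkernel)
  · have hpow := (intervalIntegral.intervalIntegrable_rpow' (a := x - a) (b := 0)
      (by linarith : -1 < α - 1)).comp_sub_left x
    simpa using (hpow.const_mul C).mul_const B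
  · filter_upwards [hIoo] with τ hτ hmem
    have hτ0 : 0 < τ := ha.trans (hτ hmem).1
    simpa [div_mul_eq_mul_div] using (tendsto_katugampolaKernel hτ0 (hτ hmem).2).mul_const (f τ)

/-- For `0 < a < x`, `α > 0` and `f` continuous on `[a, x]`, the
generalized (Katugampola) fractional integral
`(ρ^{1-α}/Γ(α)) ∫_a^x τ^{ρ-1} (x^ρ - τ^ρ)^{α-1} f(τ) dτ`
tends, as `ρ → 0⁺`, to the Hadamard fractional integral
`(1/Γ(α)) ∫_a^x (log(x/τ))^{α-1} f(τ) dτ/τ`. -/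
theorem genI_tendsto_hadamard (a x α : ℝ) (ha : 0 < a) (hax : a < x)
    (hα : 0 < α) (f : ℝ → ℝ) (hf : ContinuousOn f (Set.Icc a x)) :
    Tendsto
      (fun ρ : ℝ =>
        (ρ ^ (1 - α) / Real.Gamma α) *
          ∫ τ in a..x, τ ^ (ρ - 1) * (x ^ ρ - τ ^ ρ) ^ (α - 1) * f τ)
      (nhdsWithin 0 (Set.Ioi (0 : ℝ)))
      (nhds ((1 / Real.Gamma α) * ∫ τ in a..x, (Real.log (x / τ)) ^ (α - 1) * f τ / τ)) := by
  refine ((tendsto_integral_katugampolaKernel_mul ha hax hα hf).const_mul _).congr fun ρ => ?_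
  simp only [katugampolaKernel, mul_assoc, intervalIntegral.integral_const_mul]
  ring
end

section
/- Let 0 < α < 1, ρ > 0, a > 0, and let f be continuous on [a, b]. Then for every x with a < x < b, the generalized fractional derivative of the generalized fractional integral of f returns f, i.e. (ρD^α_{a+} (ρI^α_{a+} f))(x) = f(x). -/
open MeasureTheory Filter Real

/-- The generalized (Katugampola) left-sided fractional integral of order `α`
with parameter `ρ` and base point `a`. -/
noncomputable def genFracIntegral (ρ α a : ℝ) (f : ℝ → ℝ) (x : ℝ) : ℝ :=
  (ρ ^ (1 - α) / Real.Gamma α) *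
    ∫ τ in a..x, τ ^ (ρ - 1) * (x ^ ρ - τ ^ ρ) ^ (α - 1) * f τ

/-- The generalized (Katugampola) left-sided fractional derivative of order
`0 < α < 1` with parameter `ρ` and base point `a`:
`(ρD^α_{a+} f)(x) = x^{1-ρ} (d/dx)(ρI^{1-α}_{a+} f)(x)`. -/
noncomputable def genFracDeriv (ρ α a : ℝ) (f : ℝ → ℝ) (x : ℝ) : ℝ :=
  x ^ (1 - ρ) * deriv (genFracIntegral ρ (1 - α) a f) x

/-!
In the variable `u = τ ^ ρ` the Katugampola integrals are Riemann–Liouville integrals, so they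
form a semigroup: `ρI^β (ρI^α f) = ρI^(α+β) f`. Exchanging the order of integration over the
triangle `a < τ < s < y` reduces this to a Beta integral in `s`. With `β = 1 - α`, for `y` near
`x` we get `ρI^(1-α) (ρI^α f) (y) = ρI^1 f (y) = ∫ τ in a..y, τ ^ (ρ - 1) * f τ`, whose derivative
at `x` is `x ^ (ρ - 1) * f x` by the fundamental theorem of calculus.
-/

open Set intervalIntegral
open ProbabilityTheory (beta)

theorem integral_rpow_mul_one_sub_rpow {p q : ℝ} (hp : 0 < p) (hq : 0 < q) :
    ∫ t in (0:ℝ)..1, t ^ (p - 1) * (1 - t) ^ (q - 1) = beta p q := by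
  rw [ProbabilityTheory.beta_eq_betaIntegralReal p q hp hq, Complex.betaIntegral,
    ← Complex.ofReal_re (∫ t in (0:ℝ)..1, t ^ (p - 1) * (1 - t) ^ (q - 1)),
    ← intervalIntegral.integral_ofReal]
  congr 1
  refine integral_congr fun t ht => ?_
  rw [uIcc_of_le zero_le_one] at ht
  push_cast
  rw [Complex.ofReal_cpow ht.1, Complex.ofReal_cpow (sub_nonneg.2 ht.2)]
  push_cast
  ring_nf

theorem integral_sub_rpow_mul_sub_rpow {p q c d : ℝ} (hp : 0 < p) (hq : 0 < q) (hcd : c < d) :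
    ∫ u in c..d, (u - c) ^ (p - 1) * (d - u) ^ (q - 1) = (d - c) ^ (p + q - 1) * beta p q := by
  have hL : 0 < d - c := sub_pos.2 hcd
  have h := integral_comp_mul_add (a := 0) (b := 1)
    (fun u => (u - c) ^ (p - 1) * (d - u) ^ (q - 1)) hL.ne' c
  simp only [mul_zero, zero_add, mul_one, sub_add_cancel, smul_eq_mul] at h
  rw [eq_inv_mul_iff_mul_eq₀ hL.ne'] at h
  rw [← h, ← integral_rpow_mul_one_sub_rpow hp hq, ← intervalIntegral.integral_const_mul,
    ← intervalIntegral.integral_const_mul]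
  refine integral_congr fun t ht => ?_
  rw [uIcc_of_le zero_le_one] at ht
  rw [show (d - c) * t + c - c = (d - c) * t by ring,
    show d - ((d - c) * t + c) = (d - c) * (1 - t) by ring,
    mul_rpow hL.le ht.1, mul_rpow hL.le (sub_nonneg.2 ht.2),
    show p + q - 1 = 1 + (p - 1) + (q - 1) by ring, rpow_add hL, rpow_add hL, rpow_one]
  ring

theorem integral_rpow_mul_rpow_sub_rpow_mul_rpow_sub_rpow {ρ p q c d : ℝ} (hρ : 0 < ρ)
    (hp : 0 < p) (hq : 0 < q) (hc : 0 ≤ c) (hcd : c < d) :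
    ∫ s in c..d, s ^ (ρ - 1) * (s ^ ρ - c ^ ρ) ^ (p - 1) * (d ^ ρ - s ^ ρ) ^ (q - 1)
      = (d ^ ρ - c ^ ρ) ^ (p + q - 1) * beta p q / ρ := by
  set G : ℝ → ℝ := fun u => (u - c ^ ρ) ^ (p - 1) * (d ^ ρ - u) ^ (q - 1)
  have hpow_mem : ∀ x ∈ Ioi (0 : ℝ), x ^ ρ ∈ Ioo (c ^ ρ) (d ^ ρ) ↔ x ∈ Ioo c d := fun x hx => by
    simp only [mem_Ioo, rpow_lt_rpow_iff hc hx.le hρ,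
      rpow_lt_rpow_iff hx.le (hc.trans hcd.le) hρ]
  have hsubst := integral_comp_rpow_Ioi_of_pos (g := (Ioo (c ^ ρ) (d ^ ρ)).indicator G) hρ
  rw [setIntegral_congr_fun measurableSet_Ioi (g := (Ioo c d).indicator
      fun x => ρ * (x ^ (ρ - 1) * G (x ^ ρ))) fun x hx => by
        simp only [indicator, hpow_mem x hx, smul_eq_mul]; split_ifs <;> ring,
    setIntegral_indicator measurableSet_Ioo, setIntegral_indicator measurableSet_Ioo,
    inter_eq_right.2 (Ioo_subset_Ioi_self.trans (Ioi_subset_Ioi hc)),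
    inter_eq_right.2 (Ioo_subset_Ioi_self.trans (Ioi_subset_Ioi (rpow_nonneg hc ρ))),
    MeasureTheory.integral_const_mul, ← integral_Ioc_eq_integral_Ioo,
    ← integral_Ioc_eq_integral_Ioo,
    ← integral_of_le hcd.le, ← integral_of_le (rpow_le_rpow hc hcd.le hρ.le),
    integral_sub_rpow_mul_sub_rpow hp hq (rpow_lt_rpow hc hcd hρ)] at hsubst
  rw [eq_div_iff hρ.ne', ← hsubst, mul_comm]
  congr 1
  refine integral_congr fun s _ => ?_
  simp only [G]
  ring

theorem integral_integral_swap_triangle {a y : ℝ} (hay : a ≤ y) {H : ℝ → ℝ → ℝ}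
    (hH : Integrable ({p : ℝ × ℝ | p.2 < p.1}.indicator (Function.uncurry H))
      ((volume.restrict (Ioc a y)).prod (volume.restrict (Ioc a y)))) :
    ∫ s in a..y, ∫ τ in a..s, H s τ = ∫ τ in a..y, ∫ s in τ..y, H s τ := by
  have hswap := integral_integral_swap
    (f := fun s τ => {p : ℝ × ℝ | p.2 < p.1}.indicator (Function.uncurry H) (s, τ)) hH
  simp only [integral_of_le hay]
  convert hswap using 1
  · refine setIntegral_congr_fun measurableSet_Ioc fun s hs => ?_
    change _ = ∫ τ in Ioc a y, (Iio s).indicator (H s) τ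
    rw [setIntegral_indicator measurableSet_Iio, integral_of_le hs.1.le,
      integral_Ioc_eq_integral_Ioo, show Ioc a y ∩ Iio s = Ioo a s by grind]
  · refine setIntegral_congr_fun measurableSet_Ioc fun τ hτ => ?_
    change _ = ∫ s in Ioc a y, (Ioi τ).indicator (fun s => H s τ) s
    rw [setIntegral_indicator measurableSet_Ioi, integral_of_le hτ.2, Ioc_inter_Ioi,
      max_eq_right hτ.1.le]

noncomputable def genFracKernel (ρ α x τ : ℝ) : ℝ :=
  τ ^ (ρ - 1) * (x ^ ρ - τ ^ ρ) ^ (α - 1)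

theorem genFracIntegral_eq_integral_genFracKernel (ρ α a : ℝ) (f : ℝ → ℝ) (x : ℝ) :
    genFracIntegral ρ α a f x
      = ρ ^ (1 - α) / Gamma α * ∫ τ in a..x, genFracKernel ρ α x τ * f τ :=
  rfl

section genFracKernel

variable {ρ α β x : ℝ}

theorem genFracKernel_nonneg (hρ : 0 ≤ ρ) {τ : ℝ} (hτ : 0 ≤ τ) (hτx : τ ≤ x) :
    0 ≤ genFracKernel ρ α x τ :=
  mul_nonneg (rpow_nonneg hτ _) (rpow_nonneg (sub_nonneg.2 (rpow_le_rpow hτ hτx hρ)) _)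

theorem measurable_genFracKernel : Measurable fun p : ℝ × ℝ => genFracKernel ρ α p.1 p.2 := by
  unfold genFracKernel
  fun_prop

theorem hasDerivAt_genFracKernel_primitive (hρ : 0 < ρ) (hα : α ≠ 0) {τ : ℝ} (hτ : 0 < τ)
    (hτx : τ < x) :
    HasDerivAt (fun t => -(x ^ ρ - t ^ ρ) ^ α / (α * ρ)) (genFracKernel ρ α x τ) τ := by
  have hpos : x ^ ρ - τ ^ ρ ≠ 0 := (sub_pos.2 (rpow_lt_rpow hτ.le hτx hρ)).ne'
  refine ((((hasDerivAt_rpow_const (p := ρ) (Or.inl hτ.ne')).const_sub (x ^ ρ)).rpow_const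
    (p := α) (Or.inl hpos)).neg.div_const (α * ρ)).congr_deriv ?_
  rw [genFracKernel]
  field_simp

theorem continuous_genFracKernel_primitive (hρ : 0 < ρ) (hα : 0 < α) :
    Continuous fun t => -(x ^ ρ - t ^ ρ) ^ α / (α * ρ) :=
  (((continuous_const.sub (continuous_rpow_const hρ.le)).rpow_const
    fun _ => Or.inr hα.le).neg).div_const _

theorem intervalIntegrable_genFracKernel (hρ : 0 < ρ) (hα : 0 < α) {c : ℝ} (hc : 0 ≤ c)
    (hcx : c ≤ x) : IntervalIntegrable (genFracKernel ρ α x) volume c x := by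
  refine intervalIntegrable_deriv_of_nonneg
    (continuous_genFracKernel_primitive (x := x) hρ hα).continuousOn (fun τ hτ => ?_)
    fun τ hτ => ?_
  all_goals rw [min_eq_left hcx, max_eq_right hcx] at hτ
  · exact hasDerivAt_genFracKernel_primitive hρ hα.ne' (hc.trans_lt hτ.1) hτ.2
  · exact genFracKernel_nonneg hρ.le (hc.trans hτ.1.le) hτ.2.le

theorem integral_genFracKernel (hρ : 0 < ρ) (hα : 0 < α) {c : ℝ} (hc : 0 ≤ c) (hcx : c ≤ x) :
    ∫ τ in c..x, genFracKernel ρ α x τ = (x ^ ρ - c ^ ρ) ^ α / (α * ρ) := by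
  rw [integral_eq_sub_of_hasDerivAt_of_le hcx
    (continuous_genFracKernel_primitive (x := x) hρ hα).continuousOn
    (fun τ hτ => hasDerivAt_genFracKernel_primitive hρ hα.ne' (hc.trans_lt hτ.1) hτ.2)
    (intervalIntegrable_genFracKernel hρ hα hc hcx), sub_self, zero_rpow hα.ne']
  ring

theorem integral_genFracKernel_mul_genFracKernel (hρ : 0 < ρ) (hα : 0 < α) (hβ : 0 < β)
    {τ : ℝ} (hτ : 0 ≤ τ) (hτx : τ < x) :
    ∫ s in τ..x, genFracKernel ρ β x s * genFracKernel ρ α s τ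
      = genFracKernel ρ (α + β) x τ * beta α β / ρ := by
  have h := integral_rpow_mul_rpow_sub_rpow_mul_rpow_sub_rpow hρ hα hβ hτ hτx
  rw [genFracKernel, mul_assoc, mul_div_assoc, ← h, ← intervalIntegral.integral_const_mul]
  refine integral_congr fun s _ => ?_
  simp only [genFracKernel]
  ring

end genFracKernel

section integrability

variable {ρ α β a y : ℝ} {f : ℝ → ℝ}

theorem setIntegral_norm_genFracKernel_mul_le (hρ : 0 < ρ) (hα : 0 < α) (ha : 0 ≤ a)
    {s : ℝ} (has : a ≤ s) {M : ℝ} (hM : ∀ τ ∈ Ioo a s, ‖f τ‖ ≤ M) :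
    ∫ τ in Ioo a s, ‖genFracKernel ρ α s τ * f τ‖ ≤ M * ((s ^ ρ - a ^ ρ) ^ α / (α * ρ)) := by
  have hint := (intervalIntegrable_genFracKernel hρ hα ha has).const_mul M
  rw [intervalIntegrable_iff_integrableOn_Ioo_of_le has] at hint
  calc ∫ τ in Ioo a s, ‖genFracKernel ρ α s τ * f τ‖
      ≤ ∫ τ in Ioo a s, M * genFracKernel ρ α s τ := by
        refine integral_mono_of_nonneg (Eventually.of_forall fun _ => norm_nonneg _) hint
          ((ae_restrict_iff' measurableSet_Ioo).2 (Eventually.of_forall fun τ hτ => ?_))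
        dsimp only
        rw [norm_mul, Real.norm_of_nonneg
          (genFracKernel_nonneg hρ.le (ha.trans hτ.1.le) hτ.2.le), mul_comm]
        exact mul_le_mul_of_nonneg_right (hM τ hτ)
          (genFracKernel_nonneg hρ.le (ha.trans hτ.1.le) hτ.2.le)
    _ = M * ((s ^ ρ - a ^ ρ) ^ α / (α * ρ)) := by
        rw [MeasureTheory.integral_const_mul, ← integral_Ioc_eq_integral_Ioo,
          ← integral_of_le has, integral_genFracKernel hρ hα ha has]

theorem integrable_indicator_genFracKernel_mul_genFracKernel (hρ : 0 < ρ) (hα : 0 < α)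
    (hβ : 0 < β) (ha : 0 ≤ a) (hay : a ≤ y) (hf : ContinuousOn f (Icc a y)) :
    Integrable ({p : ℝ × ℝ | p.2 < p.1}.indicator
        fun p => genFracKernel ρ β y p.1 * (genFracKernel ρ α p.1 p.2 * f p.2))
      ((volume.restrict (Ioc a y)).prod (volume.restrict (Ioc a y))) := by
  obtain ⟨M, hM⟩ := isCompact_Icc.exists_bound_of_continuousOn hf
  have hM0 : 0 ≤ M := (norm_nonneg _).trans (hM a (left_mem_Icc.2 hay))
  have hf_meas : AEStronglyMeasurable f (volume.restrict (Ioc a y)) :=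
    (hf.aestronglyMeasurable measurableSet_Icc).mono_measure
      (Measure.restrict_mono Ioc_subset_Icc_self le_rfl)
  have hmeas : AEStronglyMeasurable ({p : ℝ × ℝ | p.2 < p.1}.indicator
      fun p => genFracKernel ρ β y p.1 * (genFracKernel ρ α p.1 p.2 * f p.2))
      ((volume.restrict (Ioc a y)).prod (volume.restrict (Ioc a y))) := by
    refine AEStronglyMeasurable.indicator ?_ (measurableSet_lt measurable_snd measurable_fst)
    have hkβ : Measurable fun p : ℝ × ℝ => genFracKernel ρ β y p.1 :=
      measurable_genFracKernel.comp (measurable_const.prodMk measurable_fst)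
    exact hkβ.aestronglyMeasurable.mul
      (measurable_genFracKernel.aestronglyMeasurable.mul hf_meas.comp_snd)
  have hslice : ∀ s ∈ Ioc a y, Ioc a y ∩ Iio s = Ioo a s := fun s hs => by grind
  rw [integrable_prod_iff hmeas]
  constructor
  · filter_upwards [ae_restrict_mem measurableSet_Ioc] with s hs
    change Integrable ((Iio s).indicator fun τ => _) _
    rw [integrable_indicator_iff measurableSet_Iio, IntegrableOn,
      Measure.restrict_restrict measurableSet_Iio, inter_comm, hslice s hs]
    have h := ((intervalIntegrable_genFracKernel hρ hα ha hs.1.le).mul_continuousOn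
      (hf.mono (by rw [uIcc_of_le hs.1.le]; exact Icc_subset_Icc_right hs.2))).const_mul
      (genFracKernel ρ β y s)
    exact ((intervalIntegrable_iff_integrableOn_Ioo_of_le hs.1.le).1 h)
  · refine Integrable.mono' (g := fun s => M * ((y ^ ρ - a ^ ρ) ^ α / (α * ρ)) *
        genFracKernel ρ β y s) ?_ hmeas.norm.integral_prod_right' ?_
    · exact (intervalIntegrable_iff_integrableOn_Ioc_of_le hay).1
        ((intervalIntegrable_genFracKernel hρ hβ ha hay).const_mul _)
    filter_upwards [ae_restrict_mem measurableSet_Ioc] with s hs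
    have hkβ := genFracKernel_nonneg (α := β) hρ.le (ha.trans hs.1.le) hs.2
    rw [Real.norm_of_nonneg (integral_nonneg fun _ => norm_nonneg _)]
    change ∫ τ in Ioc a y, ‖(Iio s).indicator
      (fun τ => genFracKernel ρ β y s * (genFracKernel ρ α s τ * f τ)) τ‖ ≤ _
    simp_rw [norm_indicator_eq_indicator_norm, norm_mul (genFracKernel ρ β y s),
      Real.norm_of_nonneg hkβ]
    rw [setIntegral_indicator measurableSet_Iio, hslice s hs, MeasureTheory.integral_const_mul]
    calc genFracKernel ρ β y s * ∫ τ in Ioo a s, ‖genFracKernel ρ α s τ * f τ‖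
        ≤ genFracKernel ρ β y s * (M * ((s ^ ρ - a ^ ρ) ^ α / (α * ρ))) :=
          mul_le_mul_of_nonneg_left (setIntegral_norm_genFracKernel_mul_le hρ hα ha hs.1.le
            fun τ hτ => hM τ ⟨hτ.1.le, hτ.2.le.trans hs.2⟩) hkβ
      _ ≤ genFracKernel ρ β y s * (M * ((y ^ ρ - a ^ ρ) ^ α / (α * ρ))) := by
          gcongr
          · exact sub_nonneg.2 (rpow_le_rpow ha hs.1.le hρ.le)
          · exact ha.trans hs.1.le
          · exact hs.2
      _ = M * ((y ^ ρ - a ^ ρ) ^ α / (α * ρ)) * genFracKernel ρ β y s := by ring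

end integrability

theorem genFracIntegral_genFracIntegral {ρ α β a y : ℝ} {f : ℝ → ℝ} (hρ : 0 < ρ) (hα : 0 < α)
    (hβ : 0 < β) (ha : 0 ≤ a) (hay : a ≤ y) (hf : ContinuousOn f (Icc a y)) :
    genFracIntegral ρ β a (genFracIntegral ρ α a f) y = genFracIntegral ρ (α + β) a f y := by
  -- not at `τ = y`: there the kernel of order `α + β` is `0 ^ 0 = 1` when `α + β = 1`
  have hinner : ∀ τ ∈ Ioo a y, ∫ s in τ..y, genFracKernel ρ β y s * (genFracKernel ρ α s τ * f τ)
      = beta α β / ρ * (genFracKernel ρ (α + β) y τ * f τ) := fun τ hτ => by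
    simp_rw [← mul_assoc]
    rw [intervalIntegral.integral_mul_const,
      integral_genFracKernel_mul_genFracKernel hρ hα hβ (ha.trans hτ.1.le) hτ.2]
    ring
  have hρpow : ρ ^ (1 - β) * ρ ^ (1 - α) = ρ ^ (1 - (α + β)) * ρ := by
    rw [← rpow_add hρ, ← rpow_add_one hρ.ne']
    ring_nf
  calc genFracIntegral ρ β a (genFracIntegral ρ α a f) y
      = ρ ^ (1 - β) / Gamma β * (ρ ^ (1 - α) / Gamma α *
          ∫ s in a..y, ∫ τ in a..s, genFracKernel ρ β y s * (genFracKernel ρ α s τ * f τ)) := by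
        rw [genFracIntegral_eq_integral_genFracKernel,
          ← intervalIntegral.integral_const_mul (ρ ^ (1 - α) / Gamma α)]
        congr 1
        refine integral_congr fun s _ => ?_
        rw [genFracIntegral_eq_integral_genFracKernel, intervalIntegral.integral_const_mul]
        ring
    _ = ρ ^ (1 - β) / Gamma β * (ρ ^ (1 - α) / Gamma α *
          ∫ τ in a..y, beta α β / ρ * (genFracKernel ρ (α + β) y τ * f τ)) := by
        rw [integral_integral_swap_triangle (H := fun s τ =>
            genFracKernel ρ β y s * (genFracKernel ρ α s τ * f τ)) hay
          (integrable_indicator_genFracKernel_mul_genFracKernel hρ hα hβ ha hay hf),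
          integral_of_le hay, integral_of_le hay, integral_Ioc_eq_integral_Ioo,
          integral_Ioc_eq_integral_Ioo, setIntegral_congr_fun measurableSet_Ioo hinner]
    _ = genFracIntegral ρ (α + β) a f y := by
        rw [intervalIntegral.integral_const_mul, genFracIntegral_eq_integral_genFracKernel, beta]
        have := Gamma_pos_of_pos hα
        have := Gamma_pos_of_pos hβ
        have := Gamma_pos_of_pos (add_pos hα hβ)
        field_simp
        linear_combination (∫ τ in a..y, genFracKernel ρ (α + β) y τ * f τ) * hρpow

theorem genFracIntegral_one (ρ a : ℝ) (f : ℝ → ℝ) (x : ℝ) :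
    genFracIntegral ρ 1 a f x = ∫ τ in a..x, τ ^ (ρ - 1) * f τ := by
  simp [genFracIntegral]

theorem hasDerivAt_genFracIntegral_one {ρ a b x : ℝ} {f : ℝ → ℝ} (ha : 0 < a)
    (hf : ContinuousOn f (Icc a b)) (hax : a < x) (hxb : x < b) :
    HasDerivAt (genFracIntegral ρ 1 a f) (x ^ (ρ - 1) * f x) x := by
  have hg : ContinuousOn (fun τ => τ ^ (ρ - 1) * f τ) (Icc a b) :=
    (continuousOn_id.rpow_const fun τ hτ => Or.inl (ha.trans_le hτ.1).ne').mul hf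
  rw [funext (genFracIntegral_one ρ a f)]
  exact integral_hasDerivAt_right
    (hg.mono (by rw [uIcc_of_le hax.le]; exact Icc_subset_Icc_right hxb.le)).intervalIntegrable
    ((hg.mono Ioo_subset_Icc_self).stronglyMeasurableAtFilter isOpen_Ioo x ⟨hax, hxb⟩)
    (hg.continuousAt (Icc_mem_nhds hax hxb))

/-- For `0 < α < 1`, `ρ > 0`, `a > 0` and `f` continuous on `[a, b]`,
the generalized fractional derivative of the generalized fractional integral of `f`
returns `f` at every `x` with `a < x < b`. -/
theorem genFracDeriv_genFracIntegral (α ρ a b : ℝ) (hα0 : 0 < α) (hα1 : α < 1)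
    (hρ : 0 < ρ) (ha : 0 < a) (f : ℝ → ℝ) (hf : ContinuousOn f (Set.Icc a b)) :
    ∀ x : ℝ, a < x → x < b →
      genFracDeriv ρ α a (genFracIntegral ρ α a f) x = f x := by
  intro x hax hxb
  have hsemigroup : genFracIntegral ρ (1 - α) a (genFracIntegral ρ α a f)
      =ᶠ[nhds x] genFracIntegral ρ 1 a f := by
    filter_upwards [Ioo_mem_nhds hax hxb] with y hy
    rw [genFracIntegral_genFracIntegral hρ hα0 (sub_pos.2 hα1) ha.le hy.1.le
      (hf.mono (Icc_subset_Icc_right hy.2.le)), add_sub_cancel]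
  rw [genFracDeriv, hsemigroup.deriv_eq, (hasDerivAt_genFracIntegral_one ha hf hax hxb).deriv,
    ← mul_assoc, ← rpow_add (ha.trans hax), sub_add_sub_cancel', sub_self, rpow_zero, one_mul]
end

section
/- Let α > 0 and let s be a real number with s < 0. Then the Mellin multiplier of the generalized fractional integral tends to (-s)^{-α} as ρ → 0⁺: lim_{ρ→0⁺} Γ(1 - s/ρ - α) / (Γ(1 - s/ρ) ρ^α) = (-s)^{-α}. -/
/-!
Log-convexity of `Γ` gives Wendel's inequalities
`(x / (x + a)) ^ (1 - a) ≤ Γ (x + a) / (Γ x * x ^ a) ≤ 1` for `0 ≤ a ≤ 1`, so this ratio tends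
to `1` as `x → ∞`; the functional equation `Γ (y + 1) = y Γ y` extends the limit to every real `a`.
With `y = 1 - s / ρ → ∞` the multiplier is the ratio for `a = -α` times `(y ρ) ^ (-α)`,
and `y ρ = ρ - s → -s`.
-/

open Filter Real Topology

theorem tendsto_add_const_div_self_atTop (a : ℝ) :
    Tendsto (fun x : ℝ => (x + a) / x) atTop (𝓝 1) := by
  have h : Tendsto (fun x : ℝ => 1 + a / x) atTop (𝓝 (1 + 0)) :=
    tendsto_const_nhds.add (tendsto_const_nhds.div_atTop tendsto_id)
  rw [add_zero] at h
  refine h.congr' ?_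
  filter_upwards [eventually_ne_atTop 0] with x hx
  rw [add_div, div_self hx]

namespace Real

theorem Gamma_add_le_Gamma_mul_rpow {x a : ℝ} (hx : 0 < x) (ha₀ : 0 ≤ a) (ha₁ : a ≤ 1) :
    Gamma (x + a) ≤ Gamma x * x ^ a := by
  rcases ha₀.eq_or_lt with rfl | ha₀
  · simp
  rcases ha₁.lt_or_eq with ha₁ | rfl
  · have hΓ := Gamma_pos_of_pos hx
    calc Gamma (x + a) = Gamma ((1 - a) * x + a * (x + 1)) := by ring_nf
      _ ≤ Gamma x ^ (1 - a) * Gamma (x + 1) ^ a :=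
        Gamma_mul_add_mul_le_rpow_Gamma_mul_rpow_Gamma hx (by linarith) (by linarith) ha₀
          (by ring)
      _ = Gamma x * x ^ a := by
        rw [Gamma_add_one hx.ne', mul_comm x, mul_rpow hΓ.le hx.le, ← mul_assoc,
          ← rpow_add hΓ, sub_add_cancel, rpow_one]
  · rw [Gamma_add_one hx.ne', rpow_one, mul_comm]

theorem div_add_rpow_le_Gamma_add_div_Gamma_mul_rpow {x a : ℝ} (hx : 0 < x) (ha₀ : 0 ≤ a)
    (ha₁ : a ≤ 1) :
    (x / (x + a)) ^ (1 - a) ≤ Gamma (x + a) / (Gamma x * x ^ a) := by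
  have hxa : 0 < x + a := by linarith
  have key := Gamma_add_le_Gamma_mul_rpow hxa (sub_nonneg.2 ha₁) (by linarith)
  rw [add_add_sub_cancel, Gamma_add_one hx.ne'] at key
  rw [le_div_iff₀ (by positivity), div_rpow hx.le hxa.le, div_mul_eq_mul_div,
    div_le_iff₀ (by positivity)]
  calc x ^ (1 - a) * (Gamma x * x ^ a) = x * Gamma x := by
        rw [mul_left_comm, ← rpow_add hx, sub_add_cancel, rpow_one, mul_comm]
    _ ≤ Gamma (x + a) * (x + a) ^ (1 - a) := key

theorem tendsto_Gamma_add_div_Gamma_mul_rpow_of_mem_Icc {a : ℝ} (ha₀ : 0 ≤ a) (ha₁ : a ≤ 1) :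
    Tendsto (fun x => Gamma (x + a) / (Gamma x * x ^ a)) atTop (𝓝 1) := by
  have hlower : Tendsto (fun x : ℝ => (x / (x + a)) ^ (1 - a)) atTop (𝓝 1) := by
    have h := ((tendsto_add_const_div_self_atTop a).inv₀ one_ne_zero).rpow_const
      (p := 1 - a) (Or.inl (by norm_num))
    simpa only [inv_div, inv_one, one_rpow] using h
  refine tendsto_of_tendsto_of_tendsto_of_le_of_le' hlower tendsto_const_nhds ?_ ?_
  · filter_upwards [eventually_gt_atTop 0] with x hx
    exact div_add_rpow_le_Gamma_add_div_Gamma_mul_rpow hx ha₀ ha₁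
  · filter_upwards [eventually_gt_atTop 0] with x hx
    rw [div_le_one (by have := Gamma_pos_of_pos hx; positivity)]
    exact Gamma_add_le_Gamma_mul_rpow hx ha₀ ha₁

theorem Gamma_add_add_one_div_Gamma_mul_rpow {x a : ℝ} (hx : 0 < x) (hxa : x + a ≠ 0) :
    Gamma (x + (a + 1)) / (Gamma x * x ^ (a + 1)) =
      (x + a) / x * (Gamma (x + a) / (Gamma x * x ^ a)) := by
  rw [← add_assoc, Gamma_add_one hxa, rpow_add_one hx.ne']
  have := (Gamma_pos_of_pos hx).ne'
  have := (rpow_pos_of_pos hx a).ne'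
  field_simp

theorem tendsto_Gamma_add_add_one_div_Gamma_mul_rpow_iff (a : ℝ) :
    Tendsto (fun x => Gamma (x + (a + 1)) / (Gamma x * x ^ (a + 1))) atTop (𝓝 1) ↔
      Tendsto (fun x => Gamma (x + a) / (Gamma x * x ^ a)) atTop (𝓝 1) := by
  have heq : (fun x => Gamma (x + (a + 1)) / (Gamma x * x ^ (a + 1))) =ᶠ[atTop]
      fun x => (x + a) / x * (Gamma (x + a) / (Gamma x * x ^ a)) := by
    filter_upwards [eventually_gt_atTop 0, eventually_gt_atTop (-a)] with x hx hxa
    exact Gamma_add_add_one_div_Gamma_mul_rpow hx (by linarith)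
  rw [tendsto_congr' heq]
  have hfac := tendsto_add_const_div_self_atTop a
  constructor
  · intro h
    have h' := h.div hfac one_ne_zero
    rw [div_one] at h'
    refine h'.congr' ?_
    filter_upwards [eventually_gt_atTop 0, eventually_gt_atTop (-a)] with x hx hxa
    exact mul_div_cancel_left₀ _ (div_pos (by linarith) hx).ne'
  · intro h
    simpa only [one_mul] using hfac.mul h

theorem tendsto_Gamma_add_div_Gamma_mul_rpow (a : ℝ) :
    Tendsto (fun x => Gamma (x + a) / (Gamma x * x ^ a)) atTop (𝓝 1) := by
  have hfract := tendsto_Gamma_add_div_Gamma_mul_rpow_of_mem_Icc (Int.fract_nonneg a)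
    (Int.fract_lt_one a).le
  have key : ∀ n : ℤ, Tendsto (fun x => Gamma (x + (Int.fract a + n)) /
      (Gamma x * x ^ (Int.fract a + n))) atTop (𝓝 1) := by
    intro n
    induction n using Int.induction_on with
    | zero => simpa using hfract
    | succ n ih =>
      push_cast
      rwa [← add_assoc, tendsto_Gamma_add_add_one_div_Gamma_mul_rpow_iff]
    | pred n ih =>
      have hshift : Int.fract a + ((-n - 1 : ℤ) : ℝ) + 1 = Int.fract a + ((-n : ℤ) : ℝ) := by
        push_cast; ring
      rwa [← tendsto_Gamma_add_add_one_div_Gamma_mul_rpow_iff, hshift]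
  simpa only [Int.fract_add_floor] using key ⌊a⌋

end Real

theorem mellin_multiplier_tendsto_general (α s : ℝ) (hs : s < 0) :
    Tendsto
      (fun ρ : ℝ => Real.Gamma (1 - s / ρ - α) / (Real.Gamma (1 - s / ρ) * ρ ^ α))
      (nhdsWithin 0 (Set.Ioi (0 : ℝ)))
      (nhds ((-s) ^ (-α))) := by
  have hy : Tendsto (fun ρ : ℝ => 1 - s / ρ) (𝓝[>] 0) atTop := by
    refine tendsto_atTop_add_const_left _ 1
      (tendsto_inv_nhdsGT_zero.const_mul_atTop (neg_pos.2 hs)) |>.congr fun ρ => ?_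
    ring
  have hyρ : Tendsto (fun ρ : ℝ => (1 - s / ρ) * ρ) (𝓝[>] 0) (𝓝 (-s)) := by
    have h : Tendsto (fun ρ : ℝ => ρ - s) (𝓝[>] 0) (𝓝 (0 - s)) :=
      (tendsto_nhdsWithin_of_tendsto_nhds tendsto_id).sub_const s
    rw [zero_sub] at h
    refine h.congr' ?_
    filter_upwards [self_mem_nhdsWithin] with ρ (hρ : 0 < ρ)
    field_simp
  have h := ((Real.tendsto_Gamma_add_div_Gamma_mul_rpow (-α)).comp hy).mul
    (hyρ.rpow_const (p := -α) (Or.inl (neg_ne_zero.2 hs.ne)))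
  rw [one_mul] at h
  refine h.congr' ?_
  filter_upwards [self_mem_nhdsWithin, hy.eventually_gt_atTop 0] with ρ (hρ : 0 < ρ) hy₀
  simp only [Function.comp_apply, ← sub_eq_add_neg]
  generalize 1 - s / ρ = y at hy₀ ⊢
  have := (Gamma_pos_of_pos hy₀).ne'
  have := (rpow_pos_of_pos hy₀ α).ne'
  have := (rpow_pos_of_pos hρ α).ne'
  rw [mul_rpow hy₀.le hρ.le, rpow_neg hy₀.le, rpow_neg hρ.le]
  field_simp

/-- For `α > 0` and real `s < 0`, the Mellin multiplier of the
generalized fractional integral tends to `(-s)^{-α}` as `ρ → 0⁺`: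
`lim_{ρ→0⁺} Γ(1 - s/ρ - α)/(Γ(1 - s/ρ) ρ^α) = (-s)^{-α}`. -/
theorem mellin_multiplier_tendsto (α s : ℝ) (hα : 0 < α) (hs : s < 0) :
    Tendsto
      (fun ρ : ℝ => Real.Gamma (1 - s / ρ - α) / (Real.Gamma (1 - s / ρ) * ρ ^ α))
      (nhdsWithin 0 (Set.Ioi (0 : ℝ)))
      (nhds ((-s) ^ (-α))) :=
  mellin_multiplier_tendsto_general α s hs
end

section
/- Let n ≥ 1 be a natural number and let f : ℝ → ℝ be n-times continuously differentiable on (0,∞). Then for every x > 0, the n-th iterate of the operator δ₂ = x²·(d/dx) applied to f satisfies (x² d/dx)^n f(x) = Σ_{j=1}^n L(n,j) x^{n+j} f^{(j)}(x), where L(n,j) = C(n-1, j-1) · n!/j! are the unsigned Lah numbers. -/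
open Filter Real Finset

/-- The operator `δ₂ = x² · (d/dx)` acting on real functions. -/
noncomputable def delta2 (f : ℝ → ℝ) : ℝ → ℝ := fun x => x ^ 2 * deriv f x

/-- The unsigned Lah numbers `L(n,j) = C(n-1, j-1) · n!/j!`, as real numbers. -/
noncomputable def lahNumber (n j : ℕ) : ℝ :=
  ((n - 1).choose (j - 1) : ℝ) * (n.factorial : ℝ) / (j.factorial : ℝ)

/-!
Induction on `n`. Since `δ₂ (x^(n+j) f^(j)) = (n+j) x^(n+j+1) f^(j) + x^(n+j+2) f^(j+1)`, applying
`δ₂` to `Σ_j L(n,j) x^(n+j) f^(j)` produces coefficients satisfying the Lah recurrence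
`L(n+1,j) = (n+j) L(n,j) + L(n,j-1)`, whose boundary values are `L(n,1) = n!` and `L(n,n+1) = 0`.
-/

theorem sum_Icc_one_eq_sum_range {M : Type*} [AddCommMonoid M] (f : ℕ → M) (n : ℕ) :
    ∑ j ∈ Icc 1 n, f j = ∑ i ∈ range n, f (i + 1) := by
  rw [range_eq_Ico, sum_Ico_add' f 0 n 1, zero_add, Ico_add_one_right_eq_Icc]

theorem lahNumber_one_right (n : ℕ) : lahNumber n 1 = n.factorial := by
  simp [lahNumber]

theorem lahNumber_eq_zero_of_lt {n j : ℕ} (hn : 0 < n) (hj : n < j) : lahNumber n j = 0 := by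
  rw [lahNumber, Nat.choose_eq_zero_of_lt (by omega)]
  simp

theorem lahNumber_succ_succ {n : ℕ} (hn : 0 < n) (j : ℕ) :
    lahNumber (n + 1) (j + 2) = (n + j + 2) * lahNumber n (j + 2) + lahNumber n (j + 1) := by
  obtain ⟨m, rfl⟩ := Nat.exists_eq_add_of_lt hn
  simp only [lahNumber, zero_add, Nat.add_sub_cancel, show j + 2 - 1 = j + 1 by omega]
  have pascal : ((m + 1).choose (j + 1) : ℝ) = m.choose j + m.choose (j + 1) := by
    exact_mod_cast Nat.choose_succ_succ m j
  have absorb : ((m + 1) * m.choose j : ℝ) = (m + 1).choose (j + 1) * (j + 1) := by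
    exact_mod_cast Nat.add_one_mul_choose_eq m j
  rw [pascal, Nat.factorial_succ (m + 1), Nat.factorial_succ (j + 1)]
  push_cast
  field_simp
  linear_combination absorb + (j + 1) * pascal

theorem sum_lahNumber_succ_mul {n : ℕ} (hn : 0 < n) (a : ℕ → ℝ) :
    ∑ j ∈ Icc 1 (n + 1), lahNumber (n + 1) j * a j =
      ∑ j ∈ Icc 1 n, lahNumber n j * ((n + j) * a j + a (j + 1)) := by
  have top : lahNumber n (n + 1) = 0 := lahNumber_eq_zero_of_lt hn n.lt_succ_self
  have diag : ∑ i ∈ range n, lahNumber n (i + 1) * ((n + (i + 1 : ℕ)) * a (i + 1)) =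
      (n + 1) * lahNumber n 1 * a 1 +
        ∑ i ∈ range n, (n + i + 2) * lahNumber n (i + 2) * a (i + 2) := by
    have extend := sum_range_succ (fun i => lahNumber n (i + 1) * ((n + (i + 1 : ℕ)) * a (i + 1))) n
    rw [top, zero_mul, add_zero] at extend
    rw [← extend, sum_range_succ', add_comm]
    congr 1
    · push_cast; ring
    · refine sum_congr rfl fun i _ => ?_
      push_cast; ring
  simp only [sum_Icc_one_eq_sum_range, mul_add, sum_add_distrib, diag]
  rw [sum_range_succ', zero_add, lahNumber_one_right, lahNumber_one_right, Nat.factorial_succ]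
  simp only [lahNumber_succ_succ hn, add_mul, sum_add_distrib]
  push_cast
  ring

theorem ContDiffAt.hasDerivAt_iteratedDeriv {𝕜 F : Type*} [NontriviallyNormedField 𝕜]
    [NormedAddCommGroup F] [NormedSpace 𝕜 F] {f : 𝕜 → F} {n : WithTop ℕ∞} {m : ℕ} {x : 𝕜}
    (hf : ContDiffAt 𝕜 n f x) (hmn : m < n) :
    HasDerivAt (iteratedDeriv m f) (iteratedDeriv (m + 1) f x) x := by
  have hd : DifferentiableAt 𝕜 (iteratedDeriv m f) x :=
    (ContinuousMultilinearMap.apply 𝕜 (fun _ : Fin m => 𝕜) F fun _ => 1).differentiableAt.comp x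
      (hf.differentiableAt_iteratedFDeriv hmn)
  rw [iteratedDeriv_succ]
  exact hd.hasDerivAt

theorem delta2_sum_mul_pow_mul_iteratedDeriv {f : ℝ → ℝ} {n : WithTop ℕ∞} {x : ℝ}
    (hf : ContDiffAt ℝ n f x) {s : Finset ℕ} (hs : ∀ j ∈ s, (j : WithTop ℕ∞) < n)
    (c : ℕ → ℝ) (m : ℕ) :
    delta2 (fun y => ∑ j ∈ s, c j * y ^ (m + j) * iteratedDeriv j f y) x =
      ∑ j ∈ s, c j * ((m + j) * (x ^ (m + j + 1) * iteratedDeriv j f x) +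
        x ^ (m + j + 2) * iteratedDeriv (j + 1) f x) := by
  have hderiv := HasDerivAt.fun_sum (u := s) fun j hj =>
    ((hasDerivAt_pow (m + j) x).fun_mul (hf.hasDerivAt_iteratedDeriv (hs j hj))).const_mul (c j)
  simp only [← mul_assoc] at hderiv
  rw [delta2, hderiv.deriv, mul_sum]
  refine sum_congr rfl fun j _ => ?_
  -- `hasDerivAt_pow` gives the exponent `m + j - 1`, truncated when `m + j = 0`.
  rcases Nat.eq_zero_or_pos (m + j) with h | h
  · obtain ⟨rfl, rfl⟩ : m = 0 ∧ j = 0 := by omega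
    push_cast; ring
  · rw [show m + j + 1 = m + j - 1 + 2 by omega]
    push_cast
    ring

theorem delta2_iterate_eqOn_lah_sum {n : ℕ} (hn : 0 < n) {f : ℝ → ℝ}
    (hf : ContDiffOn ℝ (n : ℕ∞) f (Set.Ioi 0)) :
    Set.EqOn (delta2^[n] f)
      (fun x => ∑ j ∈ Icc 1 n, lahNumber n j * x ^ (n + j) * iteratedDeriv j f x) (Set.Ioi 0) := by
  induction n, hn using Nat.le_induction with
  | base => intro x _; simp [delta2, lahNumber]
  | succ n hn ih =>
    intro x hx
    have hx' : Set.Ioi (0 : ℝ) ∈ nhds x := Ioi_mem_nhds hx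
    have hfn : ContDiffOn ℝ (n : ℕ∞) f (Set.Ioi 0) := hf.of_le (by exact_mod_cast n.le_succ)
    calc (delta2^[n + 1] f) x
        = delta2 (fun y => ∑ j ∈ Icc 1 n, lahNumber n j * y ^ (n + j) * iteratedDeriv j f y) x := by
          rw [Function.iterate_succ_apply', delta2, delta2,
            ((ih hfn).eventuallyEq_of_mem hx').deriv_eq]
      _ = ∑ j ∈ Icc 1 n, lahNumber n j * ((n + j) * (x ^ (n + 1 + j) * iteratedDeriv j f x) +
            x ^ (n + 1 + (j + 1)) * iteratedDeriv (j + 1) f x) := by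
          rw [delta2_sum_mul_pow_mul_iteratedDeriv (hf.contDiffAt hx') fun j hj => by
            exact_mod_cast Nat.lt_succ_of_le (mem_Icc.mp hj).2]
          exact sum_congr rfl fun j _ => by ring
      _ = ∑ j ∈ Icc 1 (n + 1), lahNumber (n + 1) j * x ^ (n + 1 + j) * iteratedDeriv j f x := by
          simp only [sum_lahNumber_succ_mul hn, mul_assoc]

/-- For `n ≥ 1` and `f : ℝ → ℝ` `n`-times continuously
differentiable on `(0,∞)`, for every `x > 0`,
`(x² d/dx)^n f(x) = Σ_{j=1}^n L(n,j) x^{n+j} f^{(j)}(x)`. -/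
theorem delta2_iterate_eq_lah_sum (n : ℕ) (hn : 1 ≤ n) (f : ℝ → ℝ)
    (hf : ContDiffOn ℝ (n : ℕ∞) f (Set.Ioi (0 : ℝ))) :
    ∀ x : ℝ, 0 < x →
      (delta2^[n] f) x =
        ∑ j ∈ Finset.Icc 1 n, lahNumber n j * x ^ (n + j) * iteratedDeriv j f x :=
  fun _ hx => delta2_iterate_eqOn_lah_sum hn hf hx
end
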